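/- arXiv:2605.24215 — 5 statements merged into one kernel-verified Lean document; each statement's English description precedes it below -/
import Mathlib

section
/- Let Q be the cone of Hermitian (2ν+K)×(2ν+K) matrices M such that there exists a positive semidefinite Hermitian ν×ν matrix X with M ⪰ [[0,X,0],[X,0,0],[0,0,0]]. Then the dual cone Q* (the set of Hermitian Y with tr(QY) ≥ 0 for all Q in Q) equals the set of matrices of the form [F; G; V]·[F; G; V]* where F, G are ν×m complex matrices, V is K×m, m = 2ν+K, and F·G* + G·F* is positive semidefinite. -/
/-!
Every positive semidefinite matrix lies in `Q` (take `X = 0`), and so does `blkQ X` for every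
`X ⪰ 0`; since `tr (blkQ X · Z) = tr (X (Z₁₂ + Z₂₁))` and the PSD cone is self-dual, a matrix of
`Q*` satisfies `Z ⪰ 0` and `Z₁₂ + Z₂₁ ⪰ 0`. Conversely these two conditions give
`tr (Q Z) = tr ((Q - blkQ X) Z) + tr (X (Z₁₂ + Z₂₁)) ≥ 0`. Finally a PSD matrix of size
`m = 2ν + K` factors as `R Rᴴ` with `R` square, and splitting the rows of `R` as `[F; G; V]`
turns `Z₁₂ + Z₂₁` into `F Gᴴ + G Fᴴ`.
-/

open Matrix
open scoped ComplexOrder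

/-- The Hermitian block matrix `[[0,X,0],[X,0,0],[0,0,0]]` with blocks of sizes ν, ν, K. -/
def blkQ (ν K : ℕ) (X : Matrix (Fin ν) (Fin ν) ℂ) :
    Matrix (Fin ν ⊕ (Fin ν ⊕ Fin K)) (Fin ν ⊕ (Fin ν ⊕ Fin K)) ℂ :=
  Matrix.fromBlocks 0 (Matrix.fromCols X 0) (Matrix.fromRows X 0) 0

/-- The cone `Q` of Hermitian matrices `M` of size `2ν+K` such that
`M ⪰ [[0,X,0],[X,0,0],[0,0,0]]` for some positive semidefinite Hermitian `X`. -/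
def Qset (ν K : ℕ) : Set (Matrix (Fin ν ⊕ (Fin ν ⊕ Fin K)) (Fin ν ⊕ (Fin ν ⊕ Fin K)) ℂ) :=
  {M | M.IsHermitian ∧ ∃ X : Matrix (Fin ν) (Fin ν) ℂ, X.PosSemidef ∧ (M - blkQ ν K X).PosSemidef}

/-- The dual cone of a set of matrices, with respect to the trace inner product
`⟨A, B⟩ = tr (A B)` on Hermitian matrices. -/
def dualSet {d : Type*} [Fintype d] (S : Set (Matrix d d ℂ)) : Set (Matrix d d ℂ) :=
  {Z | Z.IsHermitian ∧ ∀ Q ∈ S, 0 ≤ ((Q * Z).trace).re}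

namespace Matrix

variable {𝕜 ι κ : Type*} [RCLike 𝕜] [Fintype ι]

open scoped MatrixOrder in
lemma PosSemidef.exists_eq_mul_conjTranspose [DecidableEq ι] {A : Matrix ι ι 𝕜}
    (hA : A.PosSemidef) : ∃ B : Matrix ι ι 𝕜, A = B * Bᴴ :=
  CStarAlgebra.nonneg_iff_eq_mul_star_self.mp hA.nonneg

lemma PosSemidef.exists_eq_mul_conjTranspose_of_card_eq [DecidableEq ι] [Fintype κ]
    (hcard : Fintype.card κ = Fintype.card ι) {A : Matrix ι ι 𝕜} (hA : A.PosSemidef) :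
    ∃ R : Matrix ι κ 𝕜, A = R * Rᴴ := by
  obtain ⟨B, rfl⟩ := hA.exists_eq_mul_conjTranspose
  refine ⟨B.submatrix id (Fintype.equivOfCardEq hcard), ?_⟩
  rw [conjTranspose_submatrix, submatrix_mul_equiv]
  simp

lemma PosSemidef.trace_mul_nonneg [DecidableEq ι] {A B : Matrix ι ι 𝕜} (hA : A.PosSemidef)
    (hB : B.PosSemidef) : 0 ≤ (A * B).trace := by
  obtain ⟨C, rfl⟩ := hA.exists_eq_mul_conjTranspose
  rw [Matrix.mul_assoc, trace_mul_comm]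
  exact (hB.conjTranspose_mul_mul_same C).trace_nonneg

lemma IsHermitian.posSemidef_of_forall_re_trace_mul_nonneg {H : Matrix ι ι 𝕜}
    (hH : H.IsHermitian) (h : ∀ X : Matrix ι ι 𝕜, X.PosSemidef → 0 ≤ RCLike.re (X * H).trace) :
    H.PosSemidef := by
  refine PosSemidef.of_dotProduct_mulVec_nonneg hH fun x => ?_
  have htrace : (vecMulVec x (star x) * H).trace = star x ⬝ᵥ H *ᵥ x := by
    rw [vecMulVec_mul, trace_vecMulVec, dotProduct_comm, dotProduct_mulVec]
  have hre := h _ (posSemidef_vecMulVec_self_star x)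
  rw [htrace] at hre
  exact RCLike.nonneg_iff.mpr ⟨hre, hH.im_star_dotProduct_mulVec_self x⟩

end Matrix

def offDiagSum {𝕜 m k : Type*} [Add 𝕜] (Z : Matrix (m ⊕ (m ⊕ k)) (m ⊕ (m ⊕ k)) 𝕜) :
    Matrix m m 𝕜 :=
  Z.submatrix Sum.inl (Sum.inr ∘ Sum.inl) + Z.submatrix (Sum.inr ∘ Sum.inl) Sum.inl

section offDiagSum

variable {𝕜 m k n : Type*} [RCLike 𝕜]

lemma isHermitian_offDiagSum {Z : Matrix (m ⊕ (m ⊕ k)) (m ⊕ (m ⊕ k)) 𝕜}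
    (hZ : Z.IsHermitian) : (offDiagSum Z).IsHermitian := by
  rw [IsHermitian, offDiagSum, conjTranspose_add, conjTranspose_submatrix, conjTranspose_submatrix,
    hZ.eq, add_comm]

lemma offDiagSum_fromRows_mul_conjTranspose [Fintype n] (F G : Matrix m n 𝕜) (V : Matrix k n 𝕜) :
    offDiagSum (fromRows F (fromRows G V) * (fromRows F (fromRows G V))ᴴ) = F * Gᴴ + G * Fᴴ := by
  ext i j
  simp [offDiagSum, mul_apply, conjTranspose_apply]

end offDiagSum

variable {ν K : ℕ}

lemma blkQ_zero : blkQ ν K 0 = 0 := by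
  simp [blkQ]

lemma isHermitian_blkQ {X : Matrix (Fin ν) (Fin ν) ℂ} (hX : X.IsHermitian) :
    (blkQ ν K X).IsHermitian := by
  simp [blkQ, IsHermitian, fromBlocks_conjTranspose, hX.eq,
    conjTranspose_fromRows_eq_fromCols_conjTranspose,
    conjTranspose_fromCols_eq_fromRows_conjTranspose]

lemma trace_blkQ_mul (X : Matrix (Fin ν) (Fin ν) ℂ)
    (Z : Matrix (Fin ν ⊕ (Fin ν ⊕ Fin K)) (Fin ν ⊕ (Fin ν ⊕ Fin K)) ℂ) :
    (blkQ ν K X * Z).trace = (X * offDiagSum Z).trace := by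
  simp [blkQ, offDiagSum, trace, mul_apply, Fintype.sum_sum_type, mul_add, Finset.sum_add_distrib]

lemma mem_Qset_of_posSemidef {P : Matrix (Fin ν ⊕ (Fin ν ⊕ Fin K)) (Fin ν ⊕ (Fin ν ⊕ Fin K)) ℂ}
    (hP : P.PosSemidef) : P ∈ Qset ν K :=
  ⟨hP.isHermitian, 0, .zero, by rwa [blkQ_zero, sub_zero]⟩

lemma blkQ_mem_Qset {X : Matrix (Fin ν) (Fin ν) ℂ} (hX : X.PosSemidef) : blkQ ν K X ∈ Qset ν K :=
  ⟨isHermitian_blkQ hX.isHermitian, X, hX, by rw [sub_self]; exact .zero⟩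

theorem mem_dualSet_Qset_iff {Z : Matrix (Fin ν ⊕ (Fin ν ⊕ Fin K)) (Fin ν ⊕ (Fin ν ⊕ Fin K)) ℂ} :
    Z ∈ dualSet (Qset ν K) ↔ Z.PosSemidef ∧ (offDiagSum Z).PosSemidef := by
  constructor
  · rintro ⟨hZ, hdual⟩
    refine ⟨hZ.posSemidef_of_forall_re_trace_mul_nonneg
        fun P hP => hdual P (mem_Qset_of_posSemidef hP),
      (isHermitian_offDiagSum hZ).posSemidef_of_forall_re_trace_mul_nonneg fun X hX => ?_⟩
    simpa [trace_blkQ_mul] using hdual _ (blkQ_mem_Qset (K := K) hX)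
  · rintro ⟨hZ, hW⟩
    refine ⟨hZ.isHermitian, fun Q ⟨_, X, hX, hQX⟩ => ?_⟩
    have hsplit : Q * Z = (Q - blkQ ν K X) * Z + blkQ ν K X * Z := by
      rw [sub_mul, sub_add_cancel]
    rw [hsplit, trace_add, trace_blkQ_mul, Complex.add_re]
    exact add_nonneg (Complex.nonneg_iff.mp (hQX.trace_mul_nonneg hZ)).1
      (Complex.nonneg_iff.mp (hX.trace_mul_nonneg hW)).1

/-- Characterization of the dual cone `Q*`: it consists exactly of the matrices
`[F; G; V]·[F; G; V]*` with `F`, `G` of size `ν × m`, `V` of size `K × m`, `m = 2ν + K`,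
and `F·G* + G·F*` positive semidefinite. -/
theorem stmt_2 (ν K : ℕ) :
    dualSet (Qset ν K) =
      {Y | ∃ F G : Matrix (Fin ν) (Fin (2 * ν + K)) ℂ,
        ∃ V : Matrix (Fin K) (Fin (2 * ν + K)) ℂ,
          (F * Gᴴ + G * Fᴴ).PosSemidef ∧
          Y = Matrix.fromRows F (Matrix.fromRows G V) *
            (Matrix.fromRows F (Matrix.fromRows G V))ᴴ} := by
  ext Z
  rw [mem_dualSet_Qset_iff, Set.mem_ofPred_eq]
  constructor
  · rintro ⟨hZ, hW⟩
    obtain ⟨R, rfl⟩ := hZ.exists_eq_mul_conjTranspose_of_card_eq (κ := Fin (2 * ν + K))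
      (by simp only [Fintype.card_sum, Fintype.card_fin]; omega)
    rw [← fromRows_toRows R, ← fromRows_toRows R.toRows₂] at hW ⊢
    rw [offDiagSum_fromRows_mul_conjTranspose] at hW
    exact ⟨_, _, _, hW, rfl⟩
  · rintro ⟨F, G, V, hFG, rfl⟩
    exact ⟨posSemidef_self_mul_conjTranspose _, by rwa [offDiagSum_fromRows_mul_conjTranspose]⟩
end

section
/- Let K be an n×m complex matrix with linearly independent columns, Z an m×m positive semidefinite Hermitian matrix, and G an n×l complex matrix. If K·Z·K* = G·G*, then there exists an m×l complex matrix R such that Z = R·R* and K·R = G. -/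
open Matrix
open scoped ComplexOrder

set_option maxHeartbeats 800000

/-- If `K` has linearly independent columns (full column rank), `Z` is positive
semidefinite, and `K·Z·K* = G·G*`, then `Z = R·R*` with `K·R = G` for some `R`. -/
theorem stmt_5 (n m l : ℕ) (K : Matrix (Fin n) (Fin m) ℂ) (hK : K.rank = m)
    (Z : Matrix (Fin m) (Fin m) ℂ) (hZ : Z.PosSemidef)
    (G : Matrix (Fin n) (Fin l) ℂ) (h : K * Z * Kᴴ = G * Gᴴ) :
    ∃ R : Matrix (Fin m) (Fin l) ℂ, Z = R * Rᴴ ∧ K * R = G := by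
  set A : Matrix (Fin m) (Fin m) ℂ := Kᴴ * K with hA
  have hrank : A.rank = Fintype.card (Fin m) := by
    rw [hA, Matrix.rank_conjTranspose_mul_self, hK, Fintype.card_fin]
  have hAunit : IsUnit A := by
    rw [← Matrix.mulVec_surjective_iff_isUnit]
    have htop : LinearMap.range A.mulVecLin = ⊤ := by
      apply Submodule.eq_top_of_finrank_eq
      rw [← Matrix.rank, hrank, Module.finrank_fintype_fun_eq_card]
    exact LinearMap.range_eq_top.mp htop
  set P : Matrix (Fin m) (Fin n) ℂ := A⁻¹ * Kᴴ with hP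
  have hPK : P * K = 1 := by
    rw [hP, Matrix.mul_assoc, ← hA,
      Matrix.nonsing_inv_mul A ((Matrix.isUnit_iff_isUnit_det A).mp hAunit)]
  have hAH : Aᴴ = A := by rw [hA, conjTranspose_mul, conjTranspose_conjTranspose]
  have hAinvH : (A⁻¹)ᴴ = A⁻¹ := by rw [Matrix.conjTranspose_nonsing_inv, hAH]
  have hKP : (K * P)ᴴ = K * P := by
    rw [conjTranspose_mul, hP, conjTranspose_mul, hAinvH, conjTranspose_conjTranspose,
      Matrix.mul_assoc]
  have key : K * P * (G * Gᴴ) = G * Gᴴ := by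
    rw [← h]
    calc K * P * (K * Z * Kᴴ) = K * (P * K) * Z * Kᴴ := by
          simp only [Matrix.mul_assoc]
      _ = K * Z * Kᴴ := by rw [hPK, Matrix.mul_one]
  have key' : G * Gᴴ * (K * P) = G * Gᴴ := by
    have h2 := congrArg conjTranspose key
    rwa [conjTranspose_mul, hKP, conjTranspose_mul, conjTranspose_conjTranspose] at h2
  refine ⟨P * G, ?_, ?_⟩
  · have e : (P * G) * (P * G)ᴴ = P * (G * Gᴴ) * Pᴴ := by
      rw [conjTranspose_mul]; simp only [Matrix.mul_assoc]
    rw [e, ← h]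
    calc Z = (P * K) * Z * (P * K)ᴴ := by
          rw [hPK, conjTranspose_one, Matrix.one_mul, Matrix.mul_one]
      _ = P * (K * Z * Kᴴ) * Pᴴ := by
          rw [conjTranspose_mul]; simp only [Matrix.mul_assoc]
  · have hM : (K * P * G - G) * (K * P * G - G)ᴴ = 0 := by
      rw [conjTranspose_sub, Matrix.sub_mul, Matrix.mul_sub, Matrix.mul_sub]
      have e1 : K * P * G * (K * P * G)ᴴ = G * Gᴴ := by
        rw [show (K * P * G)ᴴ = Gᴴ * (K * P) by rw [conjTranspose_mul, hKP]]
        calc K * P * G * (Gᴴ * (K * P)) = K * P * (G * Gᴴ * (K * P)) := by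
              simp only [Matrix.mul_assoc]
          _ = K * P * (G * Gᴴ) := by rw [key']
          _ = G * Gᴴ := key
      have e2 : K * P * G * Gᴴ = G * Gᴴ := by
        rw [Matrix.mul_assoc (K * P), key]
      have e3 : G * (K * P * G)ᴴ = G * Gᴴ := by
        rw [show (K * P * G)ᴴ = Gᴴ * (K * P) by rw [conjTranspose_mul, hKP],
          ← Matrix.mul_assoc, key']
      rw [e1, e2, e3]; abel
    have hz := Matrix.self_mul_conjTranspose_eq_zero.mp hM
    rw [← Matrix.mul_assoc]
    exact sub_eq_zero.mp hz
end

section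
/- Let f, g be vectors in ℂ^ν with f·g* + g·f* positive semidefinite (where f·g* denotes the outer product, a ν×ν matrix). Then either g = 0, or there exists a complex number s with nonnegative real part such that f = s·g. -/
/-!
Write `⟪x, y⟫` for the inner product of `ℂ^ν`. The quadratic form of `f g* + g f*` is
`x ↦ 2 Re (⟪x, f⟫ ⟪g, x⟫)`. If some `x ⊥ g` had `⟪x, f⟫ ≠ 0`, adding a multiple of `x` to `g`
would give a vector `y` with `⟪y, f⟫ = -1` and `⟪g, y⟫ = ‖g‖²`, making the form negative.
So `g⊥ ⊆ f⊥`, i.e. `f ∈ (g⊥)⊥ = span {g}`, and testing the form at `g` shows `Re s ≥ 0`.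
-/

open Matrix RCLike
open scoped ComplexOrder

section InnerProductSpace

variable {𝕜 E : Type*} [RCLike 𝕜] [NormedAddCommGroup E] [InnerProductSpace 𝕜 E]

local notation "⟪" x ", " y "⟫" => inner 𝕜 x y

theorem inner_eq_zero_of_re_inner_mul_inner_nonneg {f g : E} (hg : g ≠ 0)
    (h : ∀ x, 0 ≤ re (⟪x, f⟫ * ⟪g, x⟫)) {x : E} (hx : ⟪g, x⟫ = 0) : ⟪x, f⟫ = 0 := by
  by_contra hxf
  set y := star (-(1 + ⟪g, f⟫) / ⟪x, f⟫) • x + g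
  have hyf : ⟪y, f⟫ = -1 := by
    simp only [y, inner_add_left, inner_smul_left, starRingEnd_apply, star_star]
    field_simp
    ring
  have hgy : ⟪g, y⟫ = (‖g‖ ^ 2 : ℝ) := by
    simp [y, inner_add_right, inner_smul_right, hx, inner_self_eq_norm_sq_to_K]
  have hy := h y
  rw [hyf, hgy, neg_one_mul, map_neg, ofReal_re] at hy
  have : 0 < ‖g‖ := norm_pos_iff.mpr hg
  nlinarith

theorem exists_re_nonneg_eq_smul_of_re_inner_mul_inner_nonneg {f g : E} (hg : g ≠ 0)
    (h : ∀ x, 0 ≤ re (⟪x, f⟫ * ⟪g, x⟫)) : ∃ s : 𝕜, 0 ≤ re s ∧ f = s • g := by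
  have hf : f ∈ (𝕜 ∙ g)ᗮᗮ := (Submodule.mem_orthogonal _ _).mpr fun x hx ↦
    inner_eq_zero_of_re_inner_mul_inner_nonneg hg h
      (Submodule.mem_orthogonal_singleton_iff_inner_right.mp hx)
  rw [Submodule.orthogonal_orthogonal] at hf
  obtain ⟨s, rfl⟩ := Submodule.mem_span_singleton.mp hf
  refine ⟨s, ?_, rfl⟩
  have hgg := h g
  rw [inner_smul_right, inner_self_eq_norm_sq_to_K, ← ofReal_pow, mul_assoc, mul_comm,
    ← ofReal_mul, re_ofReal_mul] at hgg
  have : 0 < ‖g‖ := norm_pos_iff.mpr hg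
  exact nonneg_of_mul_nonneg_right hgg (by positivity)

theorem re_inner_mul_inner_add_inner_mul_inner (f g x : E) :
    re (⟪x, f⟫ * ⟪g, x⟫ + ⟪x, g⟫ * ⟪f, x⟫) = 2 * re (⟪x, f⟫ * ⟪g, x⟫) := by
  rw [map_add, ← inner_conj_symm x g, ← inner_conj_symm f x, ← map_mul, conj_re,
    mul_comm ⟪g, x⟫]
  ring

end InnerProductSpace

namespace Matrix

variable {𝕜 n : Type*} [RCLike 𝕜] [Fintype n]

local notation "⟪" x ", " y "⟫" => inner 𝕜 (WithLp.toLp 2 x) (WithLp.toLp 2 y)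

theorem dotProduct_mulVec_vecMulVec_add_vecMulVec (f g x : n → 𝕜) :
    star x ⬝ᵥ ((vecMulVec f (star g) + vecMulVec g (star f)) *ᵥ x) =
      ⟪x, f⟫ * ⟪g, x⟫ + ⟪x, g⟫ * ⟪f, x⟫ := by
  simp only [add_mulVec, vecMulVec_mulVec, dotProduct_add, dotProduct_smul,
    EuclideanSpace.inner_toLp_toLp, dotProduct_comm _ (star _), op_smul_eq_mul, mul_comm]

theorem PosSemidef.re_inner_mul_inner_nonneg {f g : n → 𝕜}
    (h : (vecMulVec f (star g) + vecMulVec g (star f)).PosSemidef) (x : n → 𝕜) :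
    0 ≤ re (⟪x, f⟫ * ⟪g, x⟫) := by
  have hx := h.re_dotProduct_nonneg x
  rw [dotProduct_mulVec_vecMulVec_add_vecMulVec, re_inner_mul_inner_add_inner_mul_inner] at hx
  linarith

end Matrix

/-- Rantzer's lemma (right half-plane version): if `f·g* + g·f*` is positive
semidefinite, then either `g = 0` or `f = s·g` for some `s` with `Re s ≥ 0`. -/
theorem stmt_7 (ν : ℕ) (f g : Fin ν → ℂ)
    (h : (Matrix.vecMulVec f (star g) + Matrix.vecMulVec g (star f)).PosSemidef) :
    g = 0 ∨ ∃ s : ℂ, 0 ≤ s.re ∧ f = s • g := by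
  rcases eq_or_ne g 0 with hg | hg
  · exact .inl hg
  obtain ⟨s, hs, hfs⟩ := exists_re_nonneg_eq_smul_of_re_inner_mul_inner_nonneg
    (f := WithLp.toLp 2 f) (g := WithLp.toLp 2 g) (by simpa using hg)
    fun x ↦ h.re_inner_mul_inner_nonneg x.ofLp
  exact .inr ⟨s, hs, congrArg WithLp.ofLp hfs⟩
end

section
/- Let f, g be vectors in ℂ^ν with f·g* + g·f* = 0 (the zero matrix). Then either g = 0, or there exists a purely imaginary complex number s = iω with ω real such that f = s·g. -/
open Matrix

/-- Rantzer's lemma (imaginary-axis version): if `f·g* + g·f* = 0`, then either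
`g = 0` or `f = (iω)·g` for some real `ω`. -/
theorem stmt_8 (ν : ℕ) (f g : Fin ν → ℂ)
    (h : Matrix.vecMulVec f (star g) + Matrix.vecMulVec g (star f) = 0) :
    g = 0 ∨ ∃ ω : ℝ, f = (Complex.I * ω) • g := by
  by_cases hg : g = 0
  · exact Or.inl hg
  right
  obtain ⟨j, hj⟩ : ∃ j, g j ≠ 0 := by
    by_contra hc; push_neg at hc; exact hg (funext hc)
  have key : ∀ i k, f i * (starRingEnd ℂ) (g k) + g i * (starRingEnd ℂ) (f k) = 0 := by
    intro i k
    have := congrFun (congrFun h i) k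
    simpa [Matrix.vecMulVec_apply, Matrix.add_apply, Pi.star_apply] using this
  have hgj' : (starRingEnd ℂ) (g j) ≠ 0 := by simpa using hj
  set c : ℂ := -((starRingEnd ℂ) (f j) / (starRingEnd ℂ) (g j)) with hc
  have hcgj : c * (starRingEnd ℂ) (g j) = -((starRingEnd ℂ) (f j)) := by
    rw [hc]; field_simp
  have hcgj2 : (starRingEnd ℂ) c * g j = -(f j) := by
    have := congrArg (starRingEnd ℂ) hcgj
    simpa using this
  have h2 : (c + (starRingEnd ℂ) c) * ((starRingEnd ℂ) (g j) * g j) = 0 := by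
    linear_combination g j * hcgj + (starRingEnd ℂ) (g j) * hcgj2 - key j j
  have hsum : c + (starRingEnd ℂ) c = 0 :=
    (mul_eq_zero.mp h2).resolve_right (mul_ne_zero hgj' hj)
  have hre : c.re = 0 := by
    have := congrArg Complex.re hsum
    simp [Complex.add_re, Complex.conj_re] at this
    linarith
  refine ⟨c.im, funext fun i => ?_⟩
  have hfi : f i = c * g i := by
    apply mul_right_cancel₀ hgj'
    linear_combination key i j - g i * hcgj
  have hcI : (Complex.I * (c.im : ℂ)) = c := by
    apply Complex.ext <;> simp [hre]
  simp only [Pi.smul_apply, smul_eq_mul, hcI]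
  exact hfi
end

section
/- Suppose the block matrix R = [[2·P̄₊^{−1} − P̄₊^{−1}·P₊·P̄₊^{−1}, 0, K],[0, P₋, P̄₋·K̄],[K*, K̄*·P̄₋, μΓ − I + K̄*·P̄₋·K + K*·P̄₋·K̄]] is positive semidefinite, where P₊, P₋, P̄₊, P̄₋ are Hermitian with P₊ ⪰ I, P₋ ⪰ I, P̄₊ ≻ 0, P̄₋ ≻ 0, K, K̄ are matrices of compatible size, Γ is Hermitian and μ > 0. Then μΓ − I − K*·(P₊ − P₋)·K is positive semidefinite. -/
open Matrix
open scoped ComplexOrder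

/-!
Compressing `R` along `[-(P̄₊K); 0; I]` cancels every `P̄₊⁻¹` and leaves `-K*P₊K` in the corner of
the `P₋`-block. Its Schur complement with respect to `P₋ ≻ 0` is
`μΓ - I + K̄*P̄₋K + K*P̄₋K̄ - K*P₊K - K̄*P̄₋P₋⁻¹P̄₋K̄ ⪰ 0`, and Young's relation
`K*P₋K ⪰ K̄*P̄₋K + K*P̄₋K̄ - K̄*P̄₋P₋⁻¹P̄₋K̄` turns this into `μΓ - I - K*(P₊ - P₋)K ⪰ 0`.
-/

namespace Matrix

variable {m n 𝕜 : Type*} [Fintype m] [Fintype n] [RCLike 𝕜]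

theorem PosSemidef.of_fromBlocks_congruence [DecidableEq n] {A : Matrix m m 𝕜}
    {B : Matrix m n 𝕜} {D : Matrix n n 𝕜} (h : (fromBlocks A B Bᴴ D).PosSemidef)
    (X : Matrix m n 𝕜) :
    (D + Bᴴ * X + Xᴴ * B + Xᴴ * A * X).PosSemidef := by
  have := h.conjTranspose_mul_mul_same (fromRows X 1)
  simp only [conjTranspose_fromRows_eq_fromCols_conjTranspose, conjTranspose_one,
    fromCols_mul_fromBlocks, fromCols_mul_fromRows, Matrix.one_mul, Matrix.mul_one,
    Matrix.add_mul] at this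
  convert this using 1
  abel

variable [DecidableEq m]

/-- `2 • Y⁻¹ - Y⁻¹ * P * Y⁻¹` is Young's linear underestimate of `P⁻¹` at `Y`; the congruence
along `-(Y * B)` recovers `Bᴴ * P * B` exactly. -/
theorem PosSemidef.sub_of_fromBlocks_overbound [DecidableEq n] {Y P : Matrix m m 𝕜}
    (hY : Y.PosDef) {B : Matrix m n 𝕜} {D : Matrix n n 𝕜}
    (h : (fromBlocks ((2 : ℝ) • Y⁻¹ - Y⁻¹ * P * Y⁻¹) B Bᴴ D).PosSemidef) :
    (D - Bᴴ * P * B).PosSemidef := by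
  have := hY.isUnit.invertible
  convert h.of_fromBlocks_congruence (-(Y * B)) using 1
  simp only [conjTranspose_neg, conjTranspose_mul, hY.isHermitian.eq, Matrix.mul_neg,
    Matrix.neg_mul, Matrix.mul_sub, Matrix.sub_mul, Matrix.smul_mul, Matrix.mul_smul,
    Matrix.mul_assoc, inv_mul_cancel_left_of_invertible, mul_inv_cancel_left_of_invertible,
    mul_inv_of_invertible, Matrix.one_mul]
  module

theorem PosDef.young_relation {X Xb : Matrix m m 𝕜} (hX : X.PosDef) (hXb : Xb.IsHermitian)
    (Y Yb : Matrix m n 𝕜) :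
    (Yᴴ * X * Y - (Ybᴴ * Xb * Y + Yᴴ * Xb * Yb - Ybᴴ * Xb * X⁻¹ * Xb * Yb)).PosSemidef := by
  have := hX.isUnit.invertible
  convert hX.posSemidef.conjTranspose_mul_mul_same (Y - X⁻¹ * Xb * Yb) using 1
  simp only [conjTranspose_sub, conjTranspose_mul, hXb.eq, hX.isHermitian.inv.eq,
    Matrix.mul_sub, Matrix.sub_mul, Matrix.mul_assoc, mul_inv_cancel_left_of_invertible,
    inv_mul_cancel_left_of_invertible]
  abel

end Matrix

theorem stmt_19_general (n c : ℕ) (Pp Pm Pbp Pbm : Matrix (Fin n) (Fin n) ℂ)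
    (hPm : (Pm - 1).PosSemidef)
    (hPbp : Pbp.PosDef) (hPbm : Pbm.PosDef)
    (K Kb : Matrix (Fin n) (Fin c) ℂ)
    (Γ : Matrix (Fin c) (Fin c) ℂ) (μ : ℝ)
    (hR : (Matrix.fromBlocks
        ((2 : ℝ) • Pbp⁻¹ - Pbp⁻¹ * Pp * Pbp⁻¹)
        (Matrix.fromCols 0 K)
        (Matrix.fromRows 0 Kᴴ)
        (Matrix.fromBlocks Pm (Pbm * Kb) (Kbᴴ * Pbm)
          (μ • Γ - 1 + Kbᴴ * Pbm * K + Kᴴ * Pbm * Kb))).PosSemidef) :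
    (μ • Γ - 1 - Kᴴ * (Pp - Pm) * K).PosSemidef := by
  have hPmPD : Pm.PosDef := by simpa using PosDef.posSemidef_add hPm PosDef.one
  have := hPmPD.isUnit.invertible
  have hB : fromRows (0 : Matrix (Fin n) (Fin n) ℂ) Kᴴ = (fromCols 0 K)ᴴ := by
    rw [conjTranspose_fromCols_eq_fromRows_conjTranspose, conjTranspose_zero]
  rw [hB] at hR
  have hInner := hR.sub_of_fromBlocks_overbound hPbp
  have hCorner :
      fromBlocks Pm (Pbm * Kb) (Kbᴴ * Pbm) (μ • Γ - 1 + Kbᴴ * Pbm * K + Kᴴ * Pbm * Kb) -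
        (fromCols 0 K)ᴴ * Pp * fromCols 0 K =
      fromBlocks Pm (Pbm * Kb) (Pbm * Kb)ᴴ
        (μ • Γ - 1 + Kbᴴ * Pbm * K + Kᴴ * Pbm * Kb - Kᴴ * Pp * K) := by
    rw [conjTranspose_fromCols_eq_fromRows_conjTranspose, fromRows_mul, fromRows_mul_fromCols,
      sub_eq_add_neg, fromBlocks_neg, fromBlocks_add]
    simp [hPbm.isHermitian.eq, sub_eq_add_neg]
  rw [hCorner] at hInner
  have hSchur := (PosDef.fromBlocks₁₁ _ _ hPmPD).1 hInner
  have hYoung := hPmPD.young_relation hPbm.isHermitian K Kb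
  refine (congrArg PosSemidef ?_).mp (hSchur.add hYoung)
  simp only [conjTranspose_mul, hPbm.isHermitian.eq, Matrix.mul_sub, Matrix.sub_mul,
    Matrix.mul_assoc]
  abel

/-- Iterative convex overbounding step: if the block matrix
`R = [[2P̄₊⁻¹ − P̄₊⁻¹P₊P̄₊⁻¹, 0, K], [0, P₋, P̄₋K̄], [K*, K̄*P̄₋, μΓ − I + K̄*P̄₋K + K*P̄₋K̄]]`
is positive semidefinite (with `P₊ ⪰ I`, `P₋ ⪰ I`, `P̄₊ ≻ 0`, `P̄₋ ≻ 0`, `Γ` Hermitian,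
`μ > 0`), then `μΓ − I − K*(P₊ − P₋)K` is positive semidefinite. -/
theorem stmt_19 (n c : ℕ) (Pp Pm Pbp Pbm : Matrix (Fin n) (Fin n) ℂ)
    (hPp : (Pp - 1).PosSemidef) (hPm : (Pm - 1).PosSemidef)
    (hPbp : Pbp.PosDef) (hPbm : Pbm.PosDef)
    (K Kb : Matrix (Fin n) (Fin c) ℂ)
    (Γ : Matrix (Fin c) (Fin c) ℂ) (hΓ : Γ.IsHermitian) (μ : ℝ) (hμ : 0 < μ)
    (hR : (Matrix.fromBlocks
        ((2 : ℝ) • Pbp⁻¹ - Pbp⁻¹ * Pp * Pbp⁻¹)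
        (Matrix.fromCols 0 K)
        (Matrix.fromRows 0 Kᴴ)
        (Matrix.fromBlocks Pm (Pbm * Kb) (Kbᴴ * Pbm)
          (μ • Γ - 1 + Kbᴴ * Pbm * K + Kᴴ * Pbm * Kb))).PosSemidef) :
    (μ • Γ - 1 - Kᴴ * (Pp - Pm) * K).PosSemidef :=
  stmt_19_general n c Pp Pm Pbp Pbm hPm hPbp hPbm K Kb Γ μ hR
end
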